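/- arXiv:1509.02869 — 5 statements merged into one kernel-verified Lean document; each statement's English description precedes it below -/
import Mathlib

section
/- For x, y in the open interval (0,1), the Rogers dilogarithm satisfies the five-term relation L(x) + L((1-x)/(1-xy)) + L((1-y)/(1-xy)) + L(y) + L(1-xy) = 3·L(1) = π²/2. -/
/-!
For fixed `y`, the five-term sum is constant in `x`. Differentiating termwise,
`Li₂'(x) = -log(1-x)/x`, so `L'(x) = -(log(1-x)/x + log x/(1-x))/2`, and after expanding the
logarithms of the products and quotients the derivative of the sum in `x` vanishes identically.
Since `L` is continuous on `[0,1]` (because `x log x → 0`), the sum may be evaluated at `x = 0`,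
where it is `L(0) + 2 L(1) + L(y) + L(1-y)`. The reflection formula `L(y) + L(1-y) = L(1)`,
proved the same way, turns this into `3 L(1)`, and `L(1) = ζ(2) = π²/6`.
-/

open Real

/-- The dilogarithm, defined by its power series (convergent for `|x| ≤ 1`). -/
noncomputable def Li2 (x : ℝ) : ℝ := ∑' k : ℕ, x ^ (k + 1) / ((k : ℝ) + 1) ^ 2

/-- The Rogers dilogarithm `L(x) = Li₂(x) + (1/2)·log x · log (1-x)`.
Since `Real.log 0 = 0`, this formula also gives the standard extended values
`L 0 = 0` and `L 1 = π²/6`. -/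
noncomputable def RogersL (x : ℝ) : ℝ := Li2 x + (1 / 2) * Real.log x * Real.log (1 - x)

open Filter Set Topology

lemma hasSum_one_div_succ_sq : HasSum (fun k : ℕ => 1 / ((k : ℝ) + 1) ^ 2) (π ^ 2 / 6) := by
  simpa using (hasSum_nat_add_iff' 1).2 hasSum_zeta_two

lemma Li2_zero : Li2 0 = 0 := by simp [Li2]

lemma Li2_one : Li2 1 = π ^ 2 / 6 := by simpa [Li2] using hasSum_one_div_succ_sq.tsum_eq

lemma continuousOn_Li2 : ContinuousOn Li2 (Icc (-1) 1) := by
  refine continuousOn_tsum (fun k => by fun_prop) hasSum_one_div_succ_sq.summable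
    fun k x hx => ?_
  rw [norm_div, norm_pow, Real.norm_eq_abs, Real.norm_of_nonneg (by positivity)]
  gcongr
  exact pow_le_one₀ (abs_nonneg x) (abs_le.2 hx)

lemma hasDerivAt_Li2 {x : ℝ} (hx : |x| < 1) (hx0 : x ≠ 0) :
    HasDerivAt Li2 (-log (1 - x) / x) x := by
  obtain ⟨r, hxr, hr1⟩ := exists_between hx
  have hterm (k : ℕ) (t : ℝ) : HasDerivAt (fun t : ℝ => t ^ (k + 1) / ((k : ℝ) + 1) ^ 2)
      (t ^ k / ((k : ℝ) + 1)) t := by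
    refine ((hasDerivAt_pow (k + 1) t).div_const (((k : ℝ) + 1) ^ 2)).congr_deriv ?_
    push_cast
    field_simp
  have hbound (k : ℕ) (t : ℝ) (ht : t ∈ Ioo (-r) r) : ‖t ^ k / ((k : ℝ) + 1)‖ ≤ r ^ k := by
    rw [norm_div, norm_pow, Real.norm_eq_abs, Real.norm_of_nonneg (by positivity)]
    calc |t| ^ k / ((k : ℝ) + 1) ≤ |t| ^ k := div_le_self (by positivity) (by simp)
      _ ≤ r ^ k := pow_le_pow_left₀ (abs_nonneg t) (abs_lt.2 ht).le k
  have hr0 : 0 < r := (abs_nonneg x).trans_lt hxr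
  have hderiv : HasDerivAt Li2 (∑' k : ℕ, x ^ k / ((k : ℝ) + 1)) x :=
    hasDerivAt_tsum_of_isPreconnected (summable_geometric_of_lt_one hr0.le hr1)
      isOpen_Ioo isPreconnected_Ioo (fun k t _ => hterm k t) hbound (y₀ := 0) ⟨by linarith, hr0⟩
      (by simp) (abs_lt.1 hxr)
  refine hderiv.congr_deriv ?_
  rw [← ((hasSum_pow_div_log_of_abs_lt_one hx).div_const x).tsum_eq]
  congr 1 with k
  field_simp
  ring

lemma hasDerivAt_RogersL {x : ℝ} (hx : x ∈ Ioo (0 : ℝ) 1) :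
    HasDerivAt RogersL (-(log (1 - x) / x + log x / (1 - x)) / 2) x := by
  obtain ⟨hx0, hx1⟩ := hx
  have hlog : HasDerivAt (fun t => log (1 - t)) (-1 / (1 - x)) x :=
    ((hasDerivAt_id x).const_sub 1).log (sub_ne_zero.2 hx1.ne')
  have h := (hasDerivAt_Li2 (abs_lt.2 ⟨by linarith, hx1⟩) hx0.ne').add
    (((hasDerivAt_log hx0.ne').const_mul (1 / 2 : ℝ)).mul hlog)
  refine h.congr_deriv ?_
  field_simp
  ring

lemma tendsto_log_mul_log_one_sub_nhdsGT_zero :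
    Tendsto (fun x => log x * log (1 - x)) (𝓝[>] 0) (𝓝 0) := by
  have hslope : Tendsto (fun x => x⁻¹ * log (1 - x)) (𝓝[>] 0) (𝓝 (-1)) := by
    have := (((hasDerivAt_id (0 : ℝ)).const_sub 1).log (by norm_num)).tendsto_slope_zero_right
    simpa using this
  have hxlog : Tendsto (fun x => x * log x) (𝓝[>] 0) (𝓝 0) := by
    simpa using continuous_mul_log.continuousAt.tendsto.mono_left (nhdsWithin_le_nhds (a := 0))
  have hprod := hxlog.mul hslope
  rw [zero_mul] at hprod
  refine hprod.congr' ?_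
  filter_upwards [self_mem_nhdsWithin] with x hx
  have hx0 : x ≠ 0 := (mem_Ioi.1 hx).ne'
  field_simp

lemma continuousOn_log_mul_log_one_sub :
    ContinuousOn (fun x => log x * log (1 - x)) (Icc 0 1) := by
  have h0 : ContinuousWithinAt (fun x => log x * log (1 - x)) (Ici 0) 0 := by
    rw [← continuousWithinAt_Ioi_iff_Ici, ContinuousWithinAt]
    simpa using tendsto_log_mul_log_one_sub_nhdsGT_zero
  intro p hp
  rcases hp.1.eq_or_lt with rfl | hp0
  · exact h0.mono Icc_subset_Ici_self
  rcases hp.2.eq_or_lt with rfl | hp1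
  · have hsub : ContinuousWithinAt (fun x : ℝ => 1 - x) (Icc 0 1) 1 := by fun_prop
    have hsymm := h0.comp_of_eq hsub (fun x hx => by simpa using hx.2) (sub_self 1)
    simpa [Function.comp_def, mul_comm] using hsymm
  · exact ((continuousAt_log hp0.ne').mul
      ((continuousAt_log (by linarith)).comp (by fun_prop))).continuousWithinAt

lemma RogersL_zero : RogersL 0 = 0 := by simp [RogersL, Li2_zero]

lemma RogersL_one : RogersL 1 = π ^ 2 / 6 := by simp [RogersL, Li2_one]

lemma continuousOn_RogersL : ContinuousOn RogersL (Icc 0 1) := by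
  have h := (continuousOn_Li2.mono (Icc_subset_Icc_left (by norm_num))).add
    ((continuousOn_const (c := (1 / 2 : ℝ))).mul continuousOn_log_mul_log_one_sub)
  exact h.congr fun x _ => by simp only [RogersL, Pi.add_apply, Pi.mul_apply, mul_assoc]

lemma eq_of_hasDerivAt_eq_zero {f : ℝ → ℝ} {a b : ℝ} (hab : a ≤ b)
    (hf : ContinuousOn f (Icc a b)) (hf' : ∀ t ∈ Ioo a b, HasDerivAt f 0 t) : f b = f a := by
  rcases hab.eq_or_lt with rfl | hab
  · rfl
  obtain ⟨c, -, hc⟩ := exists_hasDerivAt_eq_slope f (fun _ => 0) hab hf hf'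
  rw [eq_comm, div_eq_zero_iff, sub_eq_zero] at hc
  exact hc.resolve_right (sub_ne_zero.2 hab.ne')

lemma RogersL_add_RogersL_one_sub {x : ℝ} (hx : x ∈ Icc (0 : ℝ) 1) :
    RogersL x + RogersL (1 - x) = π ^ 2 / 6 := by
  have hsymm : MapsTo (fun z : ℝ => 1 - z) (Icc 0 1) (Icc 0 1) :=
    fun z hz => ⟨by linarith [hz.2], by linarith [hz.1]⟩
  have hcont : ContinuousOn (fun z => RogersL z + RogersL (1 - z)) (Icc 0 1) :=
    continuousOn_RogersL.add (continuousOn_RogersL.comp (by fun_prop) hsymm)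
  have hderiv (t : ℝ) (ht : t ∈ Ioo (0 : ℝ) 1) :
      HasDerivAt (fun z => RogersL z + RogersL (1 - z)) 0 t := by
    have ht' : 1 - t ∈ Ioo (0 : ℝ) 1 := ⟨by linarith [ht.2], by linarith [ht.1]⟩
    refine ((hasDerivAt_RogersL ht).add
      ((hasDerivAt_RogersL ht').comp t ((hasDerivAt_id t).const_sub 1))).congr_deriv ?_
    simp only [sub_sub_cancel]
    ring
  have := eq_of_hasDerivAt_eq_zero hx.1 (hcont.mono (Icc_subset_Icc_right hx.2))
    fun t ht => hderiv t ⟨ht.1, ht.2.trans_le hx.2⟩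
  simpa [RogersL_zero, RogersL_one] using this

noncomputable def rogersFiveTerm (x y : ℝ) : ℝ :=
  RogersL x + RogersL ((1 - x) / (1 - x * y)) + RogersL ((1 - y) / (1 - x * y)) +
    RogersL y + RogersL (1 - x * y)

lemma five_term_args_mem_Icc {x y : ℝ} (hx : x ∈ Icc (0 : ℝ) 1) (hy : y ∈ Ico (0 : ℝ) 1) :
    (1 - x) / (1 - x * y) ∈ Icc (0 : ℝ) 1 ∧ (1 - y) / (1 - x * y) ∈ Icc (0 : ℝ) 1 ∧
      1 - x * y ∈ Icc (0 : ℝ) 1 := by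
  obtain ⟨hx0, hx1⟩ := hx
  obtain ⟨hy0, hy1⟩ := hy
  have hxy : x * y < 1 := by nlinarith
  have hden : 0 < 1 - x * y := by linarith
  refine ⟨⟨by bound, (div_le_one hden).2 (by nlinarith)⟩,
    ⟨by bound, (div_le_one hden).2 (by nlinarith)⟩, by linarith, by nlinarith⟩

lemma five_term_args_mem_Ioo {x y : ℝ} (hx : x ∈ Ioo (0 : ℝ) 1) (hy : y ∈ Ioo (0 : ℝ) 1) :
    (1 - x) / (1 - x * y) ∈ Ioo (0 : ℝ) 1 ∧ (1 - y) / (1 - x * y) ∈ Ioo (0 : ℝ) 1 ∧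
      1 - x * y ∈ Ioo (0 : ℝ) 1 := by
  obtain ⟨hx0, hx1⟩ := hx
  obtain ⟨hy0, hy1⟩ := hy
  have hxy : x * y < 1 := by nlinarith
  have hden : 0 < 1 - x * y := by linarith
  refine ⟨⟨by bound, (div_lt_one hden).2 (by nlinarith)⟩,
    ⟨by bound, (div_lt_one hden).2 (by nlinarith)⟩, by linarith, by nlinarith⟩

lemma continuousOn_rogersFiveTerm {y : ℝ} (hy : y ∈ Ico (0 : ℝ) 1) :
    ContinuousOn (fun x => rogersFiveTerm x y) (Icc 0 1) := by
  have hden : ∀ x ∈ Icc (0 : ℝ) 1, 1 - x * y ≠ 0 := fun x hx => by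
    nlinarith [hx.1, hx.2, hy.1, hy.2]
  have hL {u : ℝ → ℝ} (hu : ContinuousOn u (Icc 0 1)) (hmem : MapsTo u (Icc 0 1) (Icc 0 1)) :
      ContinuousOn (fun x => RogersL (u x)) (Icc 0 1) :=
    continuousOn_RogersL.comp hu hmem
  unfold rogersFiveTerm
  refine (((hL continuousOn_id fun x hx => hx).add (hL ?_ fun x hx => ?_)).add
    (hL ?_ fun x hx => ?_) |>.add continuousOn_const).add (hL (by fun_prop) fun x hx => ?_)
  · exact (continuousOn_const.sub continuousOn_id).div (by fun_prop) hden
  · exact (five_term_args_mem_Icc hx hy).1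
  · exact continuousOn_const.div (by fun_prop) hden
  · exact (five_term_args_mem_Icc hx hy).2.1
  · exact (five_term_args_mem_Icc hx hy).2.2

lemma hasDerivAt_rogersFiveTerm {x y : ℝ} (hx : x ∈ Ioo (0 : ℝ) 1) (hy : y ∈ Ioo (0 : ℝ) 1) :
    HasDerivAt (fun x => rogersFiveTerm x y) 0 x := by
  obtain ⟨hu, hv, hw⟩ := five_term_args_mem_Ioo hx hy
  obtain ⟨hx0, hx1⟩ := hx
  obtain ⟨hy0, hy1⟩ := hy
  have hden : 0 < 1 - x * y := hw.1
  have hw' : HasDerivAt (fun x => 1 - x * y) (-y) x := by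
    simpa using ((hasDerivAt_id x).mul_const y).const_sub 1
  have hu' : HasDerivAt (fun x => (1 - x) / (1 - x * y))
      ((-1 * (1 - x * y) - (1 - x) * -y) / (1 - x * y) ^ 2) x :=
    ((hasDerivAt_id x).const_sub 1).div hw' hden.ne'
  have hv' : HasDerivAt (fun x => (1 - y) / (1 - x * y))
      ((0 * (1 - x * y) - (1 - y) * -y) / (1 - x * y) ^ 2) x :=
    (hasDerivAt_const x (1 - y)).div hw' hden.ne'
  have h := ((((hasDerivAt_RogersL ⟨hx0, hx1⟩).add ((hasDerivAt_RogersL hu).comp x hu')).add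
    ((hasDerivAt_RogersL hv).comp x hv')).add_const (RogersL y)).add
    ((hasDerivAt_RogersL hw).comp x hw')
  refine h.congr_deriv ?_
  have e1 : 1 - (1 - x) / (1 - x * y) = x * (1 - y) / (1 - x * y) := by field_simp; ring
  have e2 : 1 - (1 - y) / (1 - x * y) = y * (1 - x) / (1 - x * y) := by
    rw [eq_div_iff hden.ne', sub_mul, div_mul_cancel₀ _ hden.ne']; ring
  have e3 : 1 - (1 - x * y) = x * y := by ring
  rw [e1, e2, e3, log_div (by positivity) hden.ne', log_div (by positivity) hden.ne',
    log_div (by positivity) hden.ne', log_div (by positivity) hden.ne',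
    log_mul hx0.ne' (by linarith), log_mul hy0.ne' (by linarith), log_mul hx0.ne' hy0.ne']
  field_simp
  ring

/-- Five-term relation for the Rogers dilogarithm:
for `x, y ∈ (0,1)`,
`L(x) + L((1-x)/(1-xy)) + L((1-y)/(1-xy)) + L(y) + L(1-xy) = 3·L(1) = π²/2`. -/
theorem rogers_five_term (x y : ℝ) (hx : x ∈ Set.Ioo (0 : ℝ) 1)
    (hy : y ∈ Set.Ioo (0 : ℝ) 1) :
    RogersL x + RogersL ((1 - x) / (1 - x * y)) + RogersL ((1 - y) / (1 - x * y)) +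
      RogersL y + RogersL (1 - x * y) = 3 * RogersL 1 ∧ 3 * RogersL 1 = π ^ 2 / 2 := by
  have hconst := eq_of_hasDerivAt_eq_zero hx.1.le
    ((continuousOn_rogersFiveTerm ⟨hy.1.le, hy.2⟩).mono (Icc_subset_Icc_right hx.2.le))
    fun t ht => hasDerivAt_rogersFiveTerm ⟨ht.1, ht.2.trans hx.2⟩ hy
  have hreflect := RogersL_add_RogersL_one_sub (x := y) ⟨hy.1.le, hy.2.le⟩
  simp only [rogersFiveTerm, zero_mul, sub_zero, div_one, RogersL_zero, RogersL_one] at hconst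
  constructor <;> linarith [RogersL_one]
end

section
/- On M_{0,6}, the dihedral coordinates on the standard cell satisfy the three 'reflection-type' relations u₁₄·u₂₄ + u₃₅·u₃₆ = 1, u₃₆·u₄₆ + u₁₅·u₂₅ = 1, and u₁₄·u₁₃ + u₂₅·u₂₆ = 1. -/
/-- On the standard cell of `M₀,₆`, the dihedral coordinates (nine numbers in `(0,1)`
satisfying the nine one-chord relations `u_{i,j} + Π_{crossing} u_{k,l} = 1`)
also satisfy the three two-chord (reflection-type) relations
`u₁₄u₂₄ + u₃₅u₃₆ = 1`, `u₃₆u₄₆ + u₁₅u₂₅ = 1`, `u₁₄u₁₃ + u₂₅u₂₆ = 1`. -/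
theorem M06_two_chord_relations (u13 u24 u35 u46 u15 u26 u14 u25 u36 : ℝ)
    (h13 : u13 ∈ Set.Ioo (0 : ℝ) 1) (h24 : u24 ∈ Set.Ioo (0 : ℝ) 1)
    (h35 : u35 ∈ Set.Ioo (0 : ℝ) 1) (h46 : u46 ∈ Set.Ioo (0 : ℝ) 1)
    (h15 : u15 ∈ Set.Ioo (0 : ℝ) 1) (h26 : u26 ∈ Set.Ioo (0 : ℝ) 1)
    (h14 : u14 ∈ Set.Ioo (0 : ℝ) 1) (h25 : u25 ∈ Set.Ioo (0 : ℝ) 1)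
    (h36 : u36 ∈ Set.Ioo (0 : ℝ) 1)
    (r13 : u13 + u24 * u25 * u26 = 1)
    (r24 : u24 + u35 * u36 * u13 = 1)
    (r35 : u35 + u46 * u14 * u24 = 1)
    (r46 : u46 + u15 * u25 * u35 = 1)
    (r15 : u15 + u26 * u36 * u46 = 1)
    (r26 : u26 + u13 * u14 * u15 = 1)
    (r14 : u14 + u25 * u26 * u35 * u36 = 1)
    (r25 : u25 + u36 * u13 * u46 * u14 = 1)
    (r36 : u36 + u14 * u15 * u24 * u25 = 1) :
    u14 * u24 + u35 * u36 = 1 ∧ u36 * u46 + u15 * u25 = 1 ∧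
      u14 * u13 + u25 * u26 = 1 := by
  refine ⟨?_, ?_, ?_⟩
  · linear_combination u24 * r14 - u35 * u36 * r13 + r24
  · linear_combination u46 * r36 - u15 * u25 * r35 + r46
  · linear_combination u26 * r25 - u13 * u14 * r15 + r26
end

section
/- Assuming the five-term relation for L and the duality relation, the equation Eq₆ holds: writing E₆ = Σ_{{i,j}∈χ₆} L(u_{i,j}), the sum of the three pulled-back five-term relations (for forgetting the marked points 2, 4, 6 respectively) gives E₆ + L(u₁₅u₂₅) + L(u₁₄u₂₄) + L(u₃₆u₄₆) + L(u₁₄u₁₃) + L(u₂₅u₂₆) + L(u₃₅u₃₆) = 9·L(1), and the three relations u₁₄u₂₄ + u₃₅u₃₆ = 1, u₃₆u₄₆ + u₁₅u₂₅ = 1, u₁₄u₁₃ + u₂₅u₂₆ = 1 together with the duality relation L(a)+L(1-a)=L(1) yield E₆ = 6·L(1). -/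
private lemma mul_mem_Ioo01 {x y : ℝ} (hx : x ∈ Set.Ioo (0:ℝ) 1) (hy : y ∈ Set.Ioo (0:ℝ) 1) :
    x * y ∈ Set.Ioo (0:ℝ) 1 := by
  obtain ⟨hx0, hx1⟩ := hx
  obtain ⟨hy0, hy1⟩ := hy
  exact ⟨mul_pos hx0 hy0, by nlinarith⟩

/-- Assuming the five-term relation and the duality relation for a function `F`,
the equation Eq₆ holds for the dihedral coordinates of `M₀,₆`: with
`E₆ = Σ_{{i,j}∈χ₆} F(u_{i,j})`, the sum of the three pulled-back five-term relations gives
`E₆ + F(u₁₅u₂₅) + F(u₁₄u₂₄) + F(u₃₆u₄₆) + F(u₁₄u₁₃) + F(u₂₅u₂₆) + F(u₃₅u₃₆) = 9 F(1)`,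
the three reflection-type relations hold, and together with duality they yield
`E₆ = 6 F(1)`. -/
theorem five_term_implies_Eq6 (F : ℝ → ℝ)
    (five_term : ∀ a ∈ Set.Ioo (0 : ℝ) 1, ∀ b ∈ Set.Ioo (0 : ℝ) 1,
      F a + F ((1 - a) / (1 - a * b)) + F ((1 - b) / (1 - a * b)) + F b + F (1 - a * b)
        = 3 * F 1)
    (duality : ∀ a ∈ Set.Ioo (0 : ℝ) 1, F a + F (1 - a) = F 1)
    (u13 u24 u35 u46 u15 u26 u14 u25 u36 : ℝ)
    (h13 : u13 ∈ Set.Ioo (0 : ℝ) 1) (h24 : u24 ∈ Set.Ioo (0 : ℝ) 1)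
    (h35 : u35 ∈ Set.Ioo (0 : ℝ) 1) (h46 : u46 ∈ Set.Ioo (0 : ℝ) 1)
    (h15 : u15 ∈ Set.Ioo (0 : ℝ) 1) (h26 : u26 ∈ Set.Ioo (0 : ℝ) 1)
    (h14 : u14 ∈ Set.Ioo (0 : ℝ) 1) (h25 : u25 ∈ Set.Ioo (0 : ℝ) 1)
    (h36 : u36 ∈ Set.Ioo (0 : ℝ) 1)
    (r13 : u13 + u24 * u25 * u26 = 1)
    (r24 : u24 + u35 * u36 * u13 = 1)
    (r35 : u35 + u46 * u14 * u24 = 1)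
    (r46 : u46 + u15 * u25 * u35 = 1)
    (r15 : u15 + u26 * u36 * u46 = 1)
    (r26 : u26 + u13 * u14 * u15 = 1)
    (r14 : u14 + u25 * u26 * u35 * u36 = 1)
    (r25 : u25 + u36 * u13 * u46 * u14 = 1)
    (r36 : u36 + u14 * u15 * u24 * u25 = 1) :
    let E6 := F u13 + F u24 + F u35 + F u46 + F u15 + F u26 + F u14 + F u25 + F u36
    (E6 + F (u15 * u25) + F (u14 * u24) + F (u36 * u46) + F (u14 * u13) +
        F (u25 * u26) + F (u35 * u36) = 9 * F 1) ∧
      (u14 * u24 + u35 * u36 = 1 ∧ u36 * u46 + u15 * u25 = 1 ∧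
        u14 * u13 + u25 * u26 = 1) ∧
      E6 = 6 * F 1 := by
  intro E6
  -- the three reflection-type relations
  have rel1 : u14 * u24 + u35 * u36 = 1 := by
    linear_combination u24 * r14 + r24 - (u35 * u36) * r13
  have rel2 : u36 * u46 + u15 * u25 = 1 := by
    linear_combination u46 * r36 + r46 - (u15 * u25) * r35
  have rel3 : u14 * u13 + u25 * u26 = 1 := by
    linear_combination u26 * r25 + r26 - (u13 * u14) * r15
  have n36 : u36 ≠ 0 := ne_of_gt h36.1
  have n25 : u25 ≠ 0 := ne_of_gt h25.1
  have n14 : u14 ≠ 0 := ne_of_gt h14.1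
  -- pentagon from forgetting point 2 : a = u14*u24, b = u15*u25
  have P2 := five_term (u14 * u24) (mul_mem_Ioo01 h14 h24)
    (u15 * u25) (mul_mem_Ioo01 h15 h25)
  rw [show (1 : ℝ) - u14 * u24 * (u15 * u25) = u36 by linear_combination -r36,
    show (1 : ℝ) - u14 * u24 = u35 * u36 by linear_combination -rel1,
    show (1 : ℝ) - u15 * u25 = u46 * u36 by linear_combination -rel2,
    mul_div_assoc, div_self n36, mul_one, mul_div_assoc, div_self n36, mul_one] at P2
  -- pentagon from forgetting point 4 : a = u36*u46, b = u13*u14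
  have P4 := five_term (u36 * u46) (mul_mem_Ioo01 h36 h46)
    (u13 * u14) (mul_mem_Ioo01 h13 h14)
  rw [show (1 : ℝ) - u36 * u46 * (u13 * u14) = u25 by linear_combination -r25,
    show (1 : ℝ) - u36 * u46 = u15 * u25 by linear_combination -rel2,
    show (1 : ℝ) - u13 * u14 = u26 * u25 by linear_combination -rel3,
    mul_div_assoc, div_self n25, mul_one, mul_div_assoc, div_self n25, mul_one,
    mul_comm u13 u14] at P4
  -- pentagon from forgetting point 6 : a = u25*u26, b = u35*u36
  have P6 := five_term (u25 * u26) (mul_mem_Ioo01 h25 h26)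
    (u35 * u36) (mul_mem_Ioo01 h35 h36)
  rw [show (1 : ℝ) - u25 * u26 * (u35 * u36) = u14 by linear_combination -r14,
    show (1 : ℝ) - u25 * u26 = u13 * u14 by linear_combination -rel3,
    show (1 : ℝ) - u35 * u36 = u24 * u14 by linear_combination -rel1,
    mul_div_assoc, div_self n14, mul_one, mul_div_assoc, div_self n14, mul_one] at P6
  -- duality applied to the three pairs
  have D1 := duality (u14 * u24) (mul_mem_Ioo01 h14 h24)
  rw [show (1 : ℝ) - u14 * u24 = u35 * u36 by linear_combination -rel1] at D1
  have D2 := duality (u36 * u46) (mul_mem_Ioo01 h36 h46)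
  rw [show (1 : ℝ) - u36 * u46 = u15 * u25 by linear_combination -rel2] at D2
  have D3 := duality (u14 * u13) (mul_mem_Ioo01 h14 h13)
  rw [show (1 : ℝ) - u14 * u13 = u25 * u26 by linear_combination -rel3] at D3
  refine ⟨by simp only [E6]; linarith [P2, P4, P6], ⟨rel1, rel2, rel3⟩, ?_⟩
  simp only [E6]
  linarith [P2, P4, P6, D1, D2, D3]
end

section
/- Theorem (Eqₙ, differential form): Let n ≥ 4 and let u_{i,j} ({i,j} ∈ χₙ) be smooth positive functions on an open connected set satisfying, for every chord {i,j}, the relation u_{i,j} + Π_{{k,l} crossing {i,j}} u_{k,l} = 1 with all u_{i,j} ∈ (0,1). Then the function Eₙ = Σ_{{i,j}∈χₙ} L(u_{i,j}) has vanishing differential: dEₙ = 0, hence Eₙ is locally constant. -/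
open Real

lemma li2_hasDerivAt_tsum {x : ℝ} (hx : |x| < 1) :
    HasDerivAt Li2 (∑' k : ℕ, x ^ k / ((k : ℝ) + 1)) x := by
  set r : ℝ := (1 + |x|) / 2 with hr
  have habs : 0 ≤ |x| := abs_nonneg x
  have hr0 : 0 < r := by positivity
  have hr1 : r < 1 := by rw [hr]; linarith
  have hmem : x ∈ Set.Ioo (-r) r := by
    constructor
    · nlinarith [neg_abs_le x]
    · nlinarith [le_abs_self x]
  have h0 : (0:ℝ) ∈ Set.Ioo (-r) r := ⟨by linarith, hr0⟩
  have hLi2 : Li2 = fun z : ℝ => ∑' k : ℕ, z ^ (k + 1) / ((k : ℝ) + 1) ^ 2 := rfl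
  rw [hLi2]
  refine hasDerivAt_tsum_of_isPreconnected (u := fun k : ℕ => r ^ k)
    (summable_geometric_of_lt_one hr0.le hr1) isOpen_Ioo (convex_Ioo _ _).isPreconnected
    (g' := fun k y => y ^ k / ((k : ℝ) + 1)) (fun k y hy => ?_) (fun k y hy => ?_) h0 ?_ hmem
  · have h := (hasDerivAt_pow (k + 1) y).div_const (((k : ℝ) + 1) ^ 2)
    have hk : ((k : ℝ) + 1) ≠ 0 := by positivity
    refine h.congr_deriv ?_
    push_cast
    field_simp
  · have hy' : |y| ≤ r := le_of_lt (abs_lt.mpr ⟨hy.1, hy.2⟩)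
    have hk : (0:ℝ) < (k : ℝ) + 1 := by positivity
    rw [Real.norm_eq_abs, abs_div, abs_pow, abs_of_pos hk]
    calc |y| ^ k / ((k:ℝ) + 1) ≤ |y| ^ k / 1 := by
          apply div_le_div_of_nonneg_left <;> first | positivity | linarith
      _ = |y| ^ k := div_one _
      _ ≤ r ^ k := pow_le_pow_left₀ (abs_nonneg y) hy' k
  · have : (fun k : ℕ => (0:ℝ) ^ (k + 1) / ((k : ℝ) + 1) ^ 2) = fun _ => 0 := by
      funext k; simp
    rw [this]
    exact summable_zero

lemma li2_hasDerivAt {x : ℝ} (hx : x ∈ Set.Ioo (0:ℝ) 1) :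
    HasDerivAt Li2 (-Real.log (1 - x) / x) x := by
  obtain ⟨h0, h1⟩ := hx
  have habs : |x| < 1 := abs_lt.mpr ⟨by linarith, h1⟩
  have h := li2_hasDerivAt_tsum habs
  have hsum : HasSum (fun k : ℕ => x ^ (k + 1) / ((k : ℝ) + 1)) (-Real.log (1 - x)) :=
    hasSum_pow_div_log_of_abs_lt_one habs
  have hx0 : x ≠ 0 := ne_of_gt h0
  have hsum2 : HasSum (fun k : ℕ => x ^ k / ((k : ℝ) + 1)) (-Real.log (1 - x) / x) := by
    have := hsum.div_const x
    refine this.congr_fun fun k => ?_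
    field_simp
    ring
  rwa [hsum2.tsum_eq] at h

lemma rogersL_hasDerivAt {x : ℝ} (hx : x ∈ Set.Ioo (0:ℝ) 1) :
    HasDerivAt RogersL
      (-(1/2) * (Real.log (1 - x) / x + Real.log x / (1 - x))) x := by
  obtain ⟨h0, h1⟩ := hx
  have hx0 : x ≠ 0 := ne_of_gt h0
  have h1x : (0:ℝ) < 1 - x := by linarith
  have h1x0 : 1 - x ≠ 0 := ne_of_gt h1x
  have hlog1 : HasDerivAt (fun y : ℝ => Real.log (1 - y)) (-1 / (1 - x)) x := by
    have hs : HasDerivAt (fun y : ℝ => 1 - y) (-1) x := (hasDerivAt_id x).const_sub 1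
    exact hs.log h1x0
  have hlogx : HasDerivAt Real.log x⁻¹ x := Real.hasDerivAt_log hx0
  have h2 : HasDerivAt (fun y : ℝ => 1 / 2 * Real.log y * Real.log (1 - y))
      ((1 / 2 * x⁻¹) * Real.log (1 - x) + (1 / 2 * Real.log x) * (-1 / (1 - x))) x :=
    (hlogx.const_mul (1/2 : ℝ)).mul hlog1
  have hR : RogersL = fun y : ℝ => Li2 y + 1 / 2 * Real.log y * Real.log (1 - y) := rfl
  rw [hR]
  have h := (li2_hasDerivAt ⟨h0, h1⟩).add h2
  refine h.congr_deriv ?_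
  field_simp
  ring

/-- The chords of the `n`-gon with vertices `1, …, n`: pairs `(i, j)` with `i < j`
such that `i, i+1, j, j+1` are distinct mod `n`. -/
def chords (n : ℕ) : Finset (ℕ × ℕ) :=
  (Finset.Icc 1 n ×ˢ Finset.Icc 1 n).filter
    (fun p => p.1 + 1 < p.2 ∧ ¬(p.1 = 1 ∧ p.2 = n))

/-- Two chords `p`, `q` (written with increasing endpoints) cross completely. -/
def Crosses (p q : ℕ × ℕ) : Prop :=
  (p.1 < q.1 ∧ q.1 < p.2 ∧ p.2 < q.2) ∨ (q.1 < p.1 ∧ p.1 < q.2 ∧ q.2 < p.2)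

instance (p : ℕ × ℕ) : DecidablePred (Crosses p) := fun q => by
  unfold Crosses; infer_instance

lemma crosses_symm (p q : ℕ × ℕ) : Crosses p q ↔ Crosses q p := by
  unfold Crosses; tauto


/-- (Eqₙ, differential form): let `n ≥ 4` and let `u_{i,j}` (`{i,j} ∈ χₙ`) be smooth
functions on an open connected set `U` with values in `(0,1)`, satisfying for every
chord the relation `u_{i,j} + Π_{{k,l} crossing {i,j}} u_{k,l} = 1`.  Then
`Eₙ = Σ_{{i,j}∈χₙ} L(u_{i,j})` has vanishing differential on `U`, hence is
(locally) constant. -/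
theorem Eqn_differential {V : Type*} [NormedAddCommGroup V] [NormedSpace ℝ V]
    (n : ℕ) (hn : 4 ≤ n) (U : Set V) (hU : IsOpen U) (hUconn : IsPreconnected U)
    (u : ℕ × ℕ → V → ℝ)
    (hmem : ∀ p ∈ chords n, ∀ x ∈ U, u p x ∈ Set.Ioo (0 : ℝ) 1)
    (hsmooth : ∀ p ∈ chords n, ContDiffOn ℝ (⊤ : ℕ∞) (u p) U)
    (hrel : ∀ p ∈ chords n, ∀ x ∈ U,
      u p x + ∏ q ∈ (chords n).filter (Crosses p), u q x = 1) :
    (∀ x ∈ U, fderivWithin ℝ (fun y => ∑ p ∈ chords n, RogersL (u p y)) U x = 0) ∧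
      ∀ x ∈ U, ∀ y ∈ U,
        (∑ p ∈ chords n, RogersL (u p x)) = ∑ p ∈ chords n, RogersL (u p y) := by
  set E : V → ℝ := fun y => ∑ p ∈ chords n, RogersL (u p y) with hEdef
  have key : ∀ x ∈ U, HasFDerivWithinAt E (0 : V →L[ℝ] ℝ) U x := by
    intro x hx
    have hxu : UniqueDiffWithinAt ℝ U x := hU.uniqueDiffWithinAt hx
    set D : ℕ × ℕ → V →L[ℝ] ℝ := fun p => fderivWithin ℝ (u p) U x with hDdef
    have hder : ∀ p ∈ chords n, HasFDerivWithinAt (u p) (D p) U x := fun p hp =>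
      (((hsmooth p hp).differentiableOn (by simp)) x hx).hasFDerivWithinAt
    have hsum : HasFDerivWithinAt E
        (∑ p ∈ chords n,
          (-(1/2) * (Real.log (1 - u p x) / u p x + Real.log (u p x) / (1 - u p x))) • D p)
        U x :=
      HasFDerivWithinAt.fun_sum fun p hp =>
        (rogersL_hasDerivAt (hmem p hp x hx)).comp_hasFDerivWithinAt x (hder p hp)
    -- per-chord rewriting
    have step : ∀ p ∈ chords n,
        (-(1/2) * (Real.log (1 - u p x) / u p x + Real.log (u p x) / (1 - u p x))) • D p
          = ∑ q ∈ (chords n).filter (Crosses p),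
              (((1/2) * Real.log (u p x) / u q x) • D q
                - ((1/2) * Real.log (u q x) / u p x) • D p) := by
      intro p hp
      set Cp := (chords n).filter (Crosses p) with hCp
      obtain ⟨hup0, hup1⟩ := hmem p hp x hx
      have h1up : (0:ℝ) < 1 - u p x := by linarith
      have hqpos : ∀ q ∈ Cp, 0 < u q x := fun q hq =>
        (hmem q (Finset.mem_filter.mp hq).1 x hx).1
      have hprod : ∏ q ∈ Cp, u q x = 1 - u p x := by
        have := hrel p hp x hx; linarith
      have hlog : Real.log (1 - u p x) = ∑ q ∈ Cp, Real.log (u q x) := by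
        rw [← hprod]
        exact Real.log_prod fun q hq => (hqpos q hq).ne'
      have hrelD : D p + ∑ q ∈ Cp, (∏ r ∈ Cp.erase q, u r x) • D q = 0 := by
        have hA : HasFDerivWithinAt (fun y => u p y + ∏ q ∈ Cp, u q y)
            (D p + ∑ q ∈ Cp, (∏ r ∈ Cp.erase q, u r x) • D q) U x :=
          (hder p hp).add (HasFDerivWithinAt.finset_prod fun q hq =>
            hder q (Finset.mem_filter.mp hq).1)
        have hB : HasFDerivWithinAt (fun y => u p y + ∏ q ∈ Cp, u q y) (0 : V →L[ℝ] ℝ) U x := by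
          refine (hasFDerivWithinAt_const (1:ℝ) x U).congr
            (fun y hy => hrel p hp y hy) (hrel p hp x hx)
        exact hxu.eq hA hB
      have hsumD : ∑ q ∈ Cp, ((1 - u p x) / u q x) • D q = -(D p) := by
        have heq : ∑ q ∈ Cp, ((1 - u p x) / u q x) • D q
            = ∑ q ∈ Cp, (∏ r ∈ Cp.erase q, u r x) • D q := by
          refine Finset.sum_congr rfl fun q hq => ?_
          congr 1
          have h := Finset.prod_erase_mul Cp (fun r => u r x) hq
          rw [hprod] at h
          rw [eq_comm, eq_div_iff (hqpos q hq).ne']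
          exact h
        rw [heq]
        exact eq_neg_of_add_eq_zero_right hrelD
      rw [Finset.sum_sub_distrib]
      have e3 : (∑ q ∈ Cp, ((1/2) * Real.log (u q x) / u p x) • D p)
          = (∑ q ∈ Cp, (1/2) * Real.log (u q x) / u p x) • D p :=
        (Finset.sum_smul).symm
      rw [e3]
      have e2 : (∑ q ∈ Cp, (1/2) * Real.log (u q x) / u p x)
          = (1/2) * Real.log (1 - u p x) / u p x := by
        rw [hlog, Finset.mul_sum, Finset.sum_div]
      have e1 : (∑ q ∈ Cp, ((1/2) * Real.log (u p x) / u q x) • D q)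
          = ((1/2) * Real.log (u p x) / (1 - u p x)) •
              (∑ q ∈ Cp, ((1 - u p x) / u q x) • D q) := by
        rw [Finset.smul_sum]
        refine Finset.sum_congr rfl fun q hq => ?_
        rw [smul_smul]
        congr 1
        exact (div_mul_div_cancel₀ h1up.ne').symm
      rw [e1, e2, hsumD, smul_neg, ← neg_smul, ← sub_smul]
      congr 1
      field_simp
      ring
    have hzero :
        (∑ p ∈ chords n,
          (-(1/2) * (Real.log (1 - u p x) / u p x + Real.log (u p x) / (1 - u p x))) • D p)
          = 0 := by
      rw [Finset.sum_congr rfl step]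
      set G : ℕ × ℕ → ℕ × ℕ → V →L[ℝ] ℝ := fun p q =>
        ((1/2) * Real.log (u p x) / u q x) • D q
          - ((1/2) * Real.log (u q x) / u p x) • D p with hG
      have hanti : ∀ p q, G p q = -G q p := fun p q => by simp [hG, neg_sub]
      have hfilter : ∀ p, (∑ q ∈ (chords n).filter (Crosses p), G p q)
          = ∑ q ∈ chords n, if Crosses p q then G p q else 0 := fun p =>
        Finset.sum_filter _ _
      rw [Finset.sum_congr rfl fun p _ => hfilter p]
      set T := ∑ p ∈ chords n, ∑ q ∈ chords n, if Crosses p q then G p q else 0 with hT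
      have hTneg : T = -T := by
        calc T = ∑ q ∈ chords n, ∑ p ∈ chords n, if Crosses p q then G p q else 0 :=
              Finset.sum_comm
          _ = ∑ q ∈ chords n, ∑ p ∈ chords n, -(if Crosses q p then G q p else 0) := by
              refine Finset.sum_congr rfl fun q _ => Finset.sum_congr rfl fun p _ => ?_
              by_cases h : Crosses p q
              · rw [if_pos h, if_pos ((crosses_symm p q).mp h), hanti p q]
              · rw [if_neg h, if_neg (fun h' => h ((crosses_symm q p).mp h')), neg_zero]
          _ = -T := by rw [hT]; simp [Finset.sum_neg_distrib]
      refine ContinuousLinearMap.ext fun v => ?_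
      have h := congrArg (fun L : V →L[ℝ] ℝ => L v) hTneg
      simp only [ContinuousLinearMap.neg_apply] at h
      simp only [ContinuousLinearMap.zero_apply]
      linarith

    rw [hzero] at hsum
    exact hsum
  refine ⟨fun x hx => (key x hx).fderivWithin (hU.uniqueDiffWithinAt hx), ?_⟩
  have hE' : ∀ z ∈ U, HasFDerivAt E (0 : V →L[ℝ] ℝ) z := fun z hz =>
    (key z hz).hasFDerivAt (hU.mem_nhds hz)
  have hball : ∀ z ∈ U, ∃ r > 0, Metric.ball z r ⊆ U ∧
      ∀ w ∈ Metric.ball z r, E w = E z := by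
    intro z hz
    obtain ⟨r, hr0, hrU⟩ := Metric.isOpen_iff.mp hU z hz
    refine ⟨r, hr0, hrU, fun w hw => ?_⟩
    refine (convex_ball z r).is_const_of_fderivWithin_eq_zero
      (fun v hv => (hE' v (hrU hv)).differentiableAt.differentiableWithinAt)
      (fun v hv => ((hE' v (hrU hv)).hasFDerivWithinAt).fderivWithin
        (Metric.isOpen_ball.uniqueDiffWithinAt hv))
      hw (Metric.mem_ball_self hr0)
  choose! r hr0 hrU hrconst using hball
  intro x hx y hy
  show E x = E y
  by_contra hne
  set A : Set V := ⋃ (z : V) (_ : z ∈ U ∧ E z = E x), Metric.ball z (r z) with hA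
  set B : Set V := ⋃ (z : V) (_ : z ∈ U ∧ E z ≠ E x), Metric.ball z (r z) with hB
  have hAopen : IsOpen A := isOpen_iUnion fun z => isOpen_iUnion fun _ => Metric.isOpen_ball
  have hBopen : IsOpen B := isOpen_iUnion fun z => isOpen_iUnion fun _ => Metric.isOpen_ball
  have hcover : U ⊆ A ∪ B := by
    intro w hw
    by_cases h : E w = E x
    · exact Or.inl (Set.mem_iUnion.mpr ⟨w, Set.mem_iUnion.mpr
        ⟨⟨hw, h⟩, Metric.mem_ball_self (hr0 w hw)⟩⟩)
    · exact Or.inr (Set.mem_iUnion.mpr ⟨w, Set.mem_iUnion.mpr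
        ⟨⟨hw, h⟩, Metric.mem_ball_self (hr0 w hw)⟩⟩)
  have hAval : ∀ w ∈ U ∩ A, E w = E x := by
    rintro w ⟨-, hw⟩
    obtain ⟨z, hz⟩ := Set.mem_iUnion.mp hw
    obtain ⟨⟨hzU, hzE⟩, hwball⟩ := Set.mem_iUnion.mp hz
    rw [hrconst z hzU w hwball, hzE]
  have hBval : ∀ w ∈ U ∩ B, E w ≠ E x := by
    rintro w ⟨-, hw⟩
    obtain ⟨z, hz⟩ := Set.mem_iUnion.mp hw
    obtain ⟨⟨hzU, hzE⟩, hwball⟩ := Set.mem_iUnion.mp hz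
    rw [hrconst z hzU w hwball]
    exact hzE
  have hAne : (U ∩ A).Nonempty :=
    ⟨x, hx, Set.mem_iUnion.mpr ⟨x, Set.mem_iUnion.mpr
      ⟨⟨hx, rfl⟩, Metric.mem_ball_self (hr0 x hx)⟩⟩⟩
  have hBne : (U ∩ B).Nonempty :=
    ⟨y, hy, Set.mem_iUnion.mpr ⟨y, Set.mem_iUnion.mpr
      ⟨⟨hy, fun h => hne h.symm⟩, Metric.mem_ball_self (hr0 y hy)⟩⟩⟩
  obtain ⟨w, hwU, hwA, hwB⟩ := hUconn A B hAopen hBopen hcover hAne hBne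
  exact hBval w ⟨hwU, hwB⟩ (hAval w ⟨hwU, hwA⟩)
end

section
/- Pullback formula for dihedral coordinates under the forgetful map: for n ≥ 5 and the map f forgetting the marked point z_m (with 1 < m < n), the pullback of a dihedral coordinate of M_{0,n-1} indexed by a chord whose endpoints correspond to vertex blocks 𝐢 and 𝐣 equals the product Π_{i ∈ 𝐢, j ∈ 𝐣} u_{i,j} of dihedral coordinates of M_{0,n}; concretely, in terms of cross-ratios of points z₁ < z₂ < ⋯ < zₙ on the real line, for indices i < i' and j < j' with the blocks separated, one has [z_i z_{i'} | z_{j'} z_j] = Π_{i ≤ k < i', j ≤ l < j'} [z_k z_{k+1} | z_{l+1} z_l], where [a b | c d] = (a-c)(b-d)/((a-d)(b-c)). -/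
/-- The cross-ratio `[a b | c d] = (a-c)(b-d)/((a-d)(b-c))`. -/
noncomputable def crossRatio (a b c d : ℝ) : ℝ := (a - c) * (b - d) / ((a - d) * (b - c))

private lemma crossRatio_mul_last (a b c d e : ℝ) (h1 : a ≠ e) (h2 : b ≠ e)
    (h3 : a ≠ d) (h4 : b ≠ c) :
    crossRatio a b e d * crossRatio a b c e = crossRatio a b c d := by
  have h1 := sub_ne_zero.mpr h1
  have h2 := sub_ne_zero.mpr h2
  have h3 := sub_ne_zero.mpr h3
  have h4 := sub_ne_zero.mpr h4
  unfold crossRatio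
  field_simp

private lemma crossRatio_mul_first (a b c d m : ℝ) (h1 : m ≠ c) (h2 : m ≠ d)
    (h3 : a ≠ d) (h4 : b ≠ c) :
    crossRatio a m c d * crossRatio m b c d = crossRatio a b c d := by
  have h1 := sub_ne_zero.mpr h1
  have h2 := sub_ne_zero.mpr h2
  have h3 := sub_ne_zero.mpr h3
  have h4 := sub_ne_zero.mpr h4
  unfold crossRatio
  field_simp

private lemma inner_telescope (z : ℕ → ℝ) (hz : StrictMono z) (k j j' : ℕ)
    (hk : k + 1 ≤ j) (h : j < j') :
    ∏ l ∈ Finset.Ico j j', crossRatio (z k) (z (k + 1)) (z (l + 1)) (z l)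
      = crossRatio (z k) (z (k + 1)) (z j') (z j) := by
  induction j', h using Nat.le_induction with
  | base => simp
  | succ j' hj' ih =>
    rw [Finset.prod_Ico_succ_top (by omega), ih]
    exact crossRatio_mul_last _ _ _ _ _
      (ne_of_lt (hz (by omega))) (ne_of_lt (hz (by omega)))
      (ne_of_lt (hz (by omega))) (ne_of_lt (hz (by omega)))

private lemma outer_telescope (z : ℕ → ℝ) (hz : StrictMono z) (i i' j j' : ℕ)
    (h1 : i < i') (h2 : i' ≤ j) (h3 : j < j') :
    ∏ k ∈ Finset.Ico i i', crossRatio (z k) (z (k + 1)) (z j') (z j)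
      = crossRatio (z i) (z i') (z j') (z j) := by
  induction i', h1 using Nat.le_induction with
  | base => simp
  | succ i' hi' ih =>
    rw [Finset.prod_Ico_succ_top (by omega), ih (by omega)]
    exact crossRatio_mul_first _ _ _ _ _
      (ne_of_lt (hz (by omega))) (ne_of_lt (hz (by omega)))
      (ne_of_lt (hz (by omega))) (ne_of_lt (hz (by omega)))

/-- Pullback formula for dihedral coordinates under forgetful maps (telescoping
cross-ratio identity): for points `z₁ < z₂ < ⋯` on the real line and separated
index blocks `i < i' ≤ j < j'`,
`[z_i z_{i'} | z_{j'} z_j] = Π_{i ≤ k < i'} Π_{j ≤ l < j'} [z_k z_{k+1} | z_{l+1} z_l]`. -/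
theorem crossRatio_telescoping (z : ℕ → ℝ) (hz : StrictMono z)
    (i i' j j' : ℕ) (h1 : i < i') (h2 : i' ≤ j) (h3 : j < j') :
    crossRatio (z i) (z i') (z j') (z j) =
      ∏ k ∈ Finset.Ico i i', ∏ l ∈ Finset.Ico j j',
        crossRatio (z k) (z (k + 1)) (z (l + 1)) (z l) := by
  rw [Finset.prod_congr rfl fun k hk => inner_telescope z hz k j j'
    (by rw [Finset.mem_Ico] at hk; omega) h3]
  exact (outer_telescope z hz i i' j j' h1 h2 h3).symm
end
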